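/- Let u, f : ℝ → ℝ be smooth functions such that f''' + 4·u·f' + 2·u'·f = 0 holds identically on ℝ. Define, for λ ∈ ℝ, the operator L^λ acting on smooth φ : ℝ → ℝ by (L^λ φ)(x) = f(x)·φ'(x) − λ·f'(x)·φ(x), and the third-order operator (Δ³φ)(x) = φ'''(x) + 4·u(x)·φ'(x) + 2·u'(x)·φ(x). Then for every smooth φ : ℝ → ℝ, L^{−2}(Δ³ φ) = Δ³(L^{1} φ) on ℝ; i.e., the vector field f·d/dx preserves the third-order projective connection. -/

import Mathlib

/-- The Lie derivative of weight `lam` along the vector field `f·d/dx`: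
`(L^lam φ)(x) = f(x)·φ'(x) − lam·f'(x)·φ(x)`. -/
noncomputable def LieDerivWt (f : ℝ → ℝ) (lam : ℝ) (φ : ℝ → ℝ) : ℝ → ℝ :=
  fun x => f x * deriv φ x - lam * deriv f x * φ x

/-- The third-order projective connection `Δ³ = ∂_x³ + 4·u·∂_x + 2·u'`. -/
noncomputable def Delta3 (u : ℝ → ℝ) (φ : ℝ → ℝ) : ℝ → ℝ :=
  fun x => iteratedDeriv 3 φ x + 4 * u x * deriv φ x + 2 * deriv u x * φ x

lemma smooth_iter {g : ℝ → ℝ} (hg : ContDiff ℝ (⊤ : ℕ∞) g) (n : ℕ) :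
    ContDiff ℝ ((⊤:ℕ∞) : WithTop ℕ∞) (iteratedDeriv n g) := by
  rw [iteratedDeriv_eq_iterate]
  exact ContDiff.iterate_deriv n (hg.of_le (by simp))

lemma hasDerivAt_iter {g : ℝ → ℝ} (hg : ContDiff ℝ (⊤ : ℕ∞) g) (n : ℕ) (x : ℝ) :
    HasDerivAt (iteratedDeriv n g) (iteratedDeriv (n + 1) g x) x := by
  rw [iteratedDeriv_succ]
  exact ((smooth_iter hg n).differentiable (by simp) x).hasDerivAt

/-- if smooth `f` satisfies the projective vector field equation
`f''' + 4·u·f' + 2·u'·f = 0`, then `L^{−2}(Δ³ φ) = Δ³(L^{1} φ)` for every smooth `φ`,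
i.e. `f·d/dx` preserves the third-order projective connection. -/
theorem stmt_7 (u f : ℝ → ℝ) (hu : ContDiff ℝ (⊤ : ℕ∞) u) (hf : ContDiff ℝ (⊤ : ℕ∞) f)
    (hproj : ∀ x : ℝ,
      iteratedDeriv 3 f x + 4 * u x * deriv f x + 2 * deriv u x * f x = 0) :
    ∀ φ : ℝ → ℝ, ContDiff ℝ (⊤ : ℕ∞) φ → ∀ x : ℝ,
      LieDerivWt f (-2) (Delta3 u φ) x = Delta3 u (LieDerivWt f 1 φ) x := by
  intro φ hφ x
  -- basic HasDerivAt facts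
  have Hf : ∀ n y, HasDerivAt (iteratedDeriv n f) (iteratedDeriv (n+1) f y) y :=
    fun n y => hasDerivAt_iter hf n y
  have Hu : ∀ n y, HasDerivAt (iteratedDeriv n u) (iteratedDeriv (n+1) u y) y :=
    fun n y => hasDerivAt_iter hu n y
  have Hφ : ∀ n y, HasDerivAt (iteratedDeriv n φ) (iteratedDeriv (n+1) φ y) y :=
    fun n y => hasDerivAt_iter hφ n y
  have hf0 : ∀ y, HasDerivAt f (deriv f y) y := fun y => by
    have := Hf 0 y; simpa [iteratedDeriv_one] using this
  have hu0 : ∀ y, HasDerivAt u (deriv u y) y := fun y => by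
    have := Hu 0 y; simpa [iteratedDeriv_one] using this
  have hφ0 : ∀ y, HasDerivAt φ (deriv φ y) y := fun y => by
    have := Hφ 0 y; simpa [iteratedDeriv_one] using this
  have hf1 : ∀ y, HasDerivAt (deriv f) (iteratedDeriv 2 f y) y := fun y => by
    have := Hf 1 y; simpa [iteratedDeriv_one] using this
  have hu1 : ∀ y, HasDerivAt (deriv u) (iteratedDeriv 2 u y) y := fun y => by
    have := Hu 1 y; simpa [iteratedDeriv_one] using this
  have hφ1 : ∀ y, HasDerivAt (deriv φ) (iteratedDeriv 2 φ y) y := fun y => by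
    have := Hφ 1 y; simpa [iteratedDeriv_one] using this
  -- derivative of the projective relation
  have hP' : iteratedDeriv 4 f x + 4 * deriv u x * deriv f x + 4 * u x * iteratedDeriv 2 f x
      + 2 * iteratedDeriv 2 u x * f x + 2 * deriv u x * deriv f x = 0 := by
    have hE : HasDerivAt (fun y => iteratedDeriv 3 f y + 4 * u y * deriv f y
        + 2 * deriv u y * f y)
        (iteratedDeriv 4 f x + ((4 * deriv u x) * deriv f x + (4 * u x) * iteratedDeriv 2 f x)
          + ((2 * iteratedDeriv 2 u x) * f x + (2 * deriv u x) * deriv f x)) x := by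
      exact ((Hf 3 x).add ((((hasDerivAt_const x (4:ℝ)).mul (hu0 x)).mul (hf1 x)).congr_deriv
        (by simp only [Pi.mul_apply]; ring))).add ((((hasDerivAt_const x (2:ℝ)).mul (hu1 x)).mul (hf0 x)).congr_deriv
        (by simp only [Pi.mul_apply]; ring))
    have hE0 : HasDerivAt (fun y => iteratedDeriv 3 f y + 4 * u y * deriv f y
        + 2 * deriv u y * f y) 0 x := by
      have : (fun y => iteratedDeriv 3 f y + 4 * u y * deriv f y + 2 * deriv u y * f y)
          = fun _ => (0:ℝ) := funext hproj
      rw [this]; exact hasDerivAt_const x 0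
    have := hE.unique hE0
    linarith [this]
  -- deriv of Delta3 u φ
  have hD : deriv (Delta3 u φ) x = iteratedDeriv 4 φ x + 4 * deriv u x * deriv φ x
      + 4 * u x * iteratedDeriv 2 φ x + 2 * iteratedDeriv 2 u x * φ x
      + 2 * deriv u x * deriv φ x := by
    have hE : HasDerivAt (Delta3 u φ)
        (iteratedDeriv 4 φ x + ((4 * deriv u x) * deriv φ x + (4 * u x) * iteratedDeriv 2 φ x)
          + ((2 * iteratedDeriv 2 u x) * φ x + (2 * deriv u x) * deriv φ x)) x := by
      exact ((Hφ 3 x).add ((((hasDerivAt_const x (4:ℝ)).mul (hu0 x)).mul (hφ1 x)).congr_deriv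
        (by simp only [Pi.mul_apply]; ring))).add ((((hasDerivAt_const x (2:ℝ)).mul (hu1 x)).mul (hφ0 x)).congr_deriv
        (by simp only [Pi.mul_apply]; ring))
    rw [hE.deriv]; ring
  -- first derivative of g := LieDerivWt f 1 φ
  have hg1 : deriv (LieDerivWt f 1 φ)
      = fun y => f y * iteratedDeriv 2 φ y - iteratedDeriv 2 f y * φ y := by
    funext y
    have hE : HasDerivAt (LieDerivWt f 1 φ)
        (f y * iteratedDeriv 2 φ y - iteratedDeriv 2 f y * φ y) y := by
      have := ((hf0 y).mul (hφ1 y)).sub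
        (((hasDerivAt_const y (1:ℝ)).mul (hf1 y)).mul (hφ0 y))
      exact this.congr_deriv (by simp only [Pi.mul_apply]; ring)
    exact hE.deriv
  -- second derivative
  have hg2 : deriv (deriv (LieDerivWt f 1 φ))
      = fun y => f y * iteratedDeriv 3 φ y + deriv f y * iteratedDeriv 2 φ y
        - iteratedDeriv 3 f y * φ y - iteratedDeriv 2 f y * deriv φ y := by
    funext y
    rw [hg1]
    have hE : HasDerivAt (fun y => f y * iteratedDeriv 2 φ y - iteratedDeriv 2 f y * φ y)
        (f y * iteratedDeriv 3 φ y + deriv f y * iteratedDeriv 2 φ y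
          - iteratedDeriv 3 f y * φ y - iteratedDeriv 2 f y * deriv φ y) y := by
      have := ((hf0 y).mul (Hφ 2 y)).sub ((Hf 2 y).mul (hφ0 y))
      exact this.congr_deriv (by ring)
    exact hE.deriv
  -- third derivative at x
  have hg3 : iteratedDeriv 3 (LieDerivWt f 1 φ) x
      = f x * iteratedDeriv 4 φ x + 2 * deriv f x * iteratedDeriv 3 φ x
        - 2 * iteratedDeriv 3 f x * deriv φ x - iteratedDeriv 4 f x * φ x := by
    have h3 : iteratedDeriv 3 (LieDerivWt f 1 φ)
        = deriv (deriv (deriv (LieDerivWt f 1 φ))) := by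
      rw [show (3:ℕ) = 2 + 1 from rfl, iteratedDeriv_succ,
        show (2:ℕ) = 1 + 1 from rfl, iteratedDeriv_succ, iteratedDeriv_one]
    rw [h3, hg2]
    have hE : HasDerivAt (fun y => f y * iteratedDeriv 3 φ y + deriv f y * iteratedDeriv 2 φ y
        - iteratedDeriv 3 f y * φ y - iteratedDeriv 2 f y * deriv φ y)
        (f x * iteratedDeriv 4 φ x + 2 * deriv f x * iteratedDeriv 3 φ x
          - 2 * iteratedDeriv 3 f x * deriv φ x - iteratedDeriv 4 f x * φ x) x := by
      have := ((((hf0 x).mul (Hφ 3 x)).add ((hf1 x).mul (Hφ 2 x))).sub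
        ((Hf 3 x).mul (hφ0 x))).sub ((Hf 2 x).mul (hφ1 x))
      exact this.congr_deriv (by ring)
    exact hE.deriv
  -- put it together
  have hP := hproj x
  simp only [LieDerivWt, Delta3] at *
  rw [hD, hg1, hg3]
  ring_nf
  linear_combination (2 * deriv φ x) * hP + φ x * hP'
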